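/- Let S_i(x) = x/3 + i for i ∈ {0,1,3}, I = [0, 9/2], and I_w = S_w(I) for a word w. If i, j ∈ T_n are distinct words avoiding the pattern (0,3) and the intervals I_i and I_j intersect, then i and j share a common prefix of length n−1 and their last letters are {0,1} in some order. -/

import Mathlib

/-- The alphabet `A = {0, 1, 3}`. -/
def A : Set ℕ := {0, 1, 3}

/-- The composition `S_w = S_{w_1} ∘ ... ∘ S_{w_n}` where `S_i(x) = x/3 + i`. -/
noncomputable def Sw (w : List ℕ) (x : ℝ) : ℝ :=
  w.foldr (fun a y => y / 3 + (a : ℝ)) x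

/-- `T_n`: words of length `n` over `A` containing no consecutive pair `(0,3)`. -/
def Tset (n : ℕ) : Set (List ℕ) :=
  {l | l.length = n ∧ (∀ x ∈ l, x ∈ A) ∧ ¬ [0, 3] <:+: l}

lemma Sw_cons (a : ℕ) (w : List ℕ) (x : ℝ) : Sw (a :: w) x = Sw w x / 3 + a := rfl

lemma Sw_inv (w : List ℕ) (hw : ∀ a ∈ w, a ∈ A) {x : ℝ}
    (hx : x ∈ Set.Icc (0:ℝ) (9/2)) : Sw w x ∈ Set.Icc (0:ℝ) (9/2) := by
  induction w with
  | nil => exact hx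
  | cons a w ih =>
    have hA : a = 0 ∨ a = 1 ∨ a = 3 := by
      have := hw a List.mem_cons_self; simpa [A] using this
    have ht := ih (fun b hb => hw b (List.mem_cons_of_mem _ hb))
    obtain ⟨h1, h2⟩ := ht
    rcases hA with rfl | rfl | rfl <;>
      simp only [Sw_cons] <;> constructor <;> push_cast <;> linarith

lemma Sw_head (a : ℕ) (w : List ℕ) (hw : ∀ b ∈ w, b ∈ A) {x : ℝ}
    (hx : x ∈ Set.Icc (0:ℝ) (9/2)) :
    (a:ℝ) ≤ Sw (a :: w) x ∧ Sw (a :: w) x ≤ a + 3/2 := by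
  obtain ⟨h1, h2⟩ := Sw_inv w hw hx
  rw [Sw_cons]
  constructor <;> linarith

/-- If `i, j ∈ T_n` are distinct and the intervals `I_i = S_i([0, 9/2])` and `I_j`
intersect, then `i, j` share a common prefix of length `n-1` and their last letters
are `{0, 1}` in some order. -/
theorem stmt_4 (n : ℕ) (i j : List ℕ) (hi : i ∈ Tset n) (hj : j ∈ Tset n)
    (hne : i ≠ j)
    (hcap : ((Sw i '' Set.Icc 0 (9 / 2)) ∩ (Sw j '' Set.Icc 0 (9 / 2))).Nonempty) :
    i.take (n - 1) = j.take (n - 1) ∧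
      ((i.getLastD 0 = 0 ∧ j.getLastD 0 = 1) ∨ (i.getLastD 0 = 1 ∧ j.getLastD 0 = 0)) := by
  induction n generalizing i j with
  | zero =>
    obtain ⟨hli, -, -⟩ := hi
    obtain ⟨hlj, -, -⟩ := hj
    rw [List.length_eq_zero_iff] at hli hlj
    exact absurd (hli.trans hlj.symm) hne
  | succ n ih =>
    obtain ⟨hli, hAi, hFi⟩ := hi
    obtain ⟨hlj, hAj, hFj⟩ := hj
    cases i with
    | nil => simp at hli
    | cons a i' =>
    cases j with
    | nil => simp at hlj
    | cons b j' =>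
    obtain ⟨p, ⟨x, hx, hpx⟩, ⟨y, hy, hpy⟩⟩ := hcap
    have hAi' : ∀ z ∈ i', z ∈ A := fun z hz => hAi z (List.mem_cons_of_mem _ hz)
    have hAj' : ∀ z ∈ j', z ∈ A := fun z hz => hAj z (List.mem_cons_of_mem _ hz)
    have hxi := Sw_head a i' hAi' hx
    have hxj := Sw_head b j' hAj' hy
    have hli' : i'.length = n := by simpa using hli
    have hlj' : j'.length = n := by simpa using hlj
    by_cases hab : a = b
    · subst hab
      cases i' with
      | nil =>
        have : j' = [] := List.length_eq_zero_iff.mp (by rw [hlj', ← hli']; rfl)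
        exact absurd (by rw [this]) hne
      | cons c i'' =>
        have hn : n ≠ 0 := by rw [← hli']; simp
        obtain ⟨m, rfl⟩ := Nat.exists_eq_succ_of_ne_zero hn
        cases j' with
        | nil => simp at hlj'
        | cons d j'' =>
        have hcap' : ((Sw (c :: i'') '' Set.Icc 0 (9 / 2)) ∩
            (Sw (d :: j'') '' Set.Icc 0 (9 / 2))).Nonempty := by
          refine ⟨Sw (c :: i'') x, ⟨x, hx, rfl⟩, ⟨y, hy, ?_⟩⟩
          have h1 : Sw (c :: i'') x / 3 + a = Sw (d :: j'') y / 3 + a := by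
            rw [← Sw_cons, ← Sw_cons, hpx, hpy]
          linarith
        have hi' : (c :: i'') ∈ Tset (m + 1) :=
          ⟨hli', hAi', fun h => hFi (h.trans (List.suffix_cons a _).isInfix)⟩
        have hj' : (d :: j'') ∈ Tset (m + 1) :=
          ⟨hlj', hAj', fun h => hFj (h.trans (List.suffix_cons a _).isInfix)⟩
        have hne' : (c :: i'') ≠ (d :: j'') := fun h => hne (by rw [h])
        obtain ⟨ht, hl⟩ := ih (c :: i'') (d :: j'') hi' hj' hne' hcap'
        refine ⟨?_, ?_⟩
        · simp only [Nat.succ_sub_one] at ht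
          simp only [Nat.add_sub_cancel, List.take_succ_cons, ht]
        · simpa only [List.getLastD_cons] using hl
    · -- heads differ
      have hp1 := hpx.trans hpy.symm  -- Sw i x = Sw j y
      have haA : a = 0 ∨ a = 1 ∨ a = 3 := by
        have := hAi a List.mem_cons_self; simpa [A] using this
      have hbA : b = 0 ∨ b = 1 ∨ b = 3 := by
        have := hAj b List.mem_cons_self; simpa [A] using this
      -- key sublemma: the 0/1 case
      have key : ∀ (u v : List ℕ), u.length = n → v.length = n →
          (∀ z ∈ u, z ∈ A) → (∀ z ∈ v, z ∈ A) → ¬ [0, 3] <:+: (0 :: u) →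
          ∀ {s t : ℝ}, s ∈ Set.Icc (0:ℝ) (9/2) → t ∈ Set.Icc (0:ℝ) (9/2) →
          Sw (0 :: u) s = Sw (1 :: v) t → u = [] ∧ v = [] := by
        intro u v hlu hlv hAu hAv hF s t hs ht heq
        cases u with
        | nil =>
          refine ⟨rfl, List.length_eq_zero_iff.mp (by rw [hlv, ← hlu]; rfl)⟩
        | cons c u' =>
          exfalso
          have hcA : c = 0 ∨ c = 1 ∨ c = 3 := by
            have := hAu c List.mem_cons_self; simpa [A] using this
          have hc3 : c ≠ 3 := by
            intro h; subst h
            exact hF ⟨[], u', rfl⟩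
          have hc1 : (c : ℝ) ≤ 1 := by
            rcases hcA with rfl | rfl | rfl <;> [norm_num; norm_num; exact absurd rfl hc3]
          have hub := Sw_head c u' (fun z hz => hAu z (List.mem_cons_of_mem _ hz)) hs
          have hlo := Sw_head 1 v hAv ht
          have h1 : Sw (0 :: c :: u') s = Sw (c :: u') s / 3 := by
            rw [Sw_cons]; push_cast; ring
          push_cast at hlo
          -- Sw (0::c::u') s ≤ (c + 3/2)/3 ≤ 5/6 < 1 ≤ Sw (1::v) t
          have : Sw (0 :: c :: u') s ≤ 5/6 := by
            rw [h1]; linarith [hub.2]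
          linarith [hlo.1, heq ▸ this]
      rcases haA with rfl | rfl | rfl <;> rcases hbA with rfl | rfl | rfl
      · exact absurd rfl hab
      · -- a = 0, b = 1
        obtain ⟨hu, hv⟩ := key i' j' hli' hlj' hAi' hAj' hFi hx hy hp1
        subst hu; subst hv
        have hn0 : n = 0 := by simpa using hli'.symm
        subst hn0
        exact ⟨by simp, Or.inl ⟨rfl, rfl⟩⟩
      · -- a = 0, b = 3 : disjoint
        exfalso; push_cast at hxi hxj; rw [hp1] at hxi; linarith [hxi.2, hxj.1]
      · -- a = 1, b = 0
        obtain ⟨hv, hu⟩ := key j' i' hlj' hli' hAj' hAi' hFj hy hx hp1.symm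
        subst hu; subst hv
        have hn0 : n = 0 := by simpa using hli'.symm
        subst hn0
        exact ⟨by simp, Or.inr ⟨rfl, rfl⟩⟩
      · exact absurd rfl hab
      · -- a = 1, b = 3
        exfalso; push_cast at hxi hxj; rw [hp1] at hxi; linarith [hxi.2, hxj.1]
      · -- a = 3, b = 0
        exfalso; push_cast at hxi hxj; rw [hp1] at hxi; linarith [hxi.1, hxj.2]
      · -- a = 3, b = 1
        exfalso; push_cast at hxi hxj; rw [hp1] at hxi; linarith [hxi.1, hxj.2]
      · exact absurd rfl hab
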